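/- arXiv:1804.11223 — 2 statements merged into one kernel-verified Lean document; each statement's English description precedes it below -/
import Mathlib

section
/- For X a finite-dimensional Hilbert space and a connected undirected graph (V,E), there exists a constant C₁ > 0 such that for every v ∈ D^⊥ and every E' ⊆ E that connects V, one can find vectors z_{(i,j)} ∈ H_{(i,j)}^⊥ for each (i,j) ∈ E' with Σ_{(i,j)∈E'} z_{(i,j)} = v and ‖z_{(i,j)}‖ ≤ C₁‖v‖ for all (i,j) ∈ E'. -/
open scoped Classical

/-- The subspace `H_(i,j) = {x : x i = x j}` of the product Hilbert space. -/
def Hsub (X : Type*) [NormedAddCommGroup X] [InnerProductSpace ℝ X] (n : ℕ) (i j : Fin n) :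
    Submodule ℝ (PiLp 2 fun _ : Fin n => X) where
  carrier := {x | x i = x j}
  add_mem' := by
    intro a b ha hb
    simp only [Set.mem_setOf_eq] at *
    simp [PiLp.add_apply, ha, hb]
  zero_mem' := by simp
  smul_mem' := by
    intro c a ha
    simp only [Set.mem_setOf_eq] at *
    simp [PiLp.smul_apply, ha]

/-- `Hsub` as a function on unordered pairs (edges). -/
def HsubSym (X : Type*) [NormedAddCommGroup X] [InnerProductSpace ℝ X] (n : ℕ) :
    Sym2 (Fin n) → Submodule ℝ (PiLp 2 fun _ : Fin n => X) :=
  Sym2.lift ⟨fun i j => Hsub X n i j, by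
    intro i j
    apply SetLike.ext
    intro x
    exact eq_comm⟩

/-- The diagonal subspace `D`. -/
def Dsub (X : Type*) [NormedAddCommGroup X] [InnerProductSpace ℝ X] (n : ℕ) :
    Submodule ℝ (PiLp 2 fun _ : Fin n => X) where
  carrier := {x | ∀ i j, x i = x j}
  add_mem' := by
    intro a b ha hb i j
    simp [PiLp.add_apply, ha i j, hb i j]
  zero_mem' := by simp
  smul_mem' := by
    intro c a ha i j
    simp [PiLp.smul_apply, ha i j]

/-! For a connected graph, the subspaces `H_e` of its edges intersect exactly in `D`, since equal
coordinates propagate along walks; dually, `D^⊥` is the sum of the `H_e^⊥`. The summation map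
`∏_e H_e^⊥ → D^⊥` is then onto, so it has a linear right inverse, which is bounded because everything
is finite-dimensional; its norm bounds the pieces of the decomposition. There are only finitely
many graphs on `Fin n`, so one constant serves them all. -/

open Filter

theorem Submodule.eventually_exists_sum_eq_of_mem_iSup_finset {𝕜 E ι : Type*}
    [NontriviallyNormedField 𝕜] [CompleteSpace 𝕜] [NormedAddCommGroup E] [NormedSpace 𝕜 E]
    [FiniteDimensional 𝕜 E] (W : ι → Submodule 𝕜 E) (s : Finset ι) :
    ∀ᶠ C in atTop, ∀ v ∈ ⨆ i ∈ s, W i, ∃ z : ι → E,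
      (∀ i ∈ s, z i ∈ W i) ∧ ∑ i ∈ s, z i = v ∧ ∀ i ∈ s, ‖z i‖ ≤ C * ‖v‖ := by
  classical
  let T : (∀ i : s, W i) →ₗ[𝕜] E := ∑ i : s, (W i).subtype ∘ₗ LinearMap.proj i
  have hT (y : ∀ i : s, W i) : T y = ∑ i : s, (y i : E) := by simp [T]
  have hrange : ⨆ i ∈ s, W i ≤ LinearMap.range T := by
    intro v hv
    obtain ⟨μ, rfl⟩ := (Submodule.mem_iSup_finset_iff_exists_sum W v).1 hv
    exact ⟨fun i => μ i, by rw [hT, Finset.sum_coe_sort s fun i => (μ i : E)]⟩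
  obtain ⟨S, hS⟩ := T.rangeRestrict.exists_rightInverse_of_surjective T.range_rangeRestrict
  let S' := LinearMap.toContinuousLinearMap S
  filter_upwards [eventually_ge_atTop ‖S'‖] with C hC v hv
  set y := S' ⟨v, hrange hv⟩
  have hTy : T y = v := congrArg Subtype.val (LinearMap.congr_fun hS ⟨v, hrange hv⟩)
  refine ⟨fun i => if h : i ∈ s then y ⟨i, h⟩ else 0, fun i hi => by simp [hi], ?_, fun i hi => ?_⟩
  · rw [Finset.sum_dite_of_true (fun _ h => h), ← hTy, hT]
  · calc ‖(if h : i ∈ s then (y ⟨i, h⟩ : E) else 0)‖ = ‖y ⟨i, hi⟩‖ := by simp [hi]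
      _ ≤ ‖y‖ := norm_le_pi_norm y _
      _ ≤ ‖S'‖ * ‖v‖ := S'.le_opNorm _
      _ ≤ C * ‖v‖ := by gcongr

section
variable {X : Type*} [NormedAddCommGroup X] [InnerProductSpace ℝ X] {n : ℕ}

lemma iInf_HsubSym_le_Dsub {G : SimpleGraph (Fin n)} (hG : G.Connected) :
    ⨅ e ∈ G.edgeFinset, HsubSym X n e ≤ Dsub X n := by
  intro x hx i j
  simp only [Submodule.mem_iInf] at hx
  induction (hG.preconnected i j).some with
  | nil => rfl
  | cons hadj _ ih =>
    exact (hx s(_, _) (SimpleGraph.mem_edgeFinset.2 hadj) : _ = _).trans ih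

variable [FiniteDimensional ℝ X]

lemma orthogonal_Dsub_le_iSup_orthogonal_HsubSym {G : SimpleGraph (Fin n)} (hG : G.Connected) :
    (Dsub X n)ᗮ ≤ ⨆ e ∈ G.edgeFinset, (HsubSym X n e)ᗮ := by
  refine (Submodule.orthogonal_le ?_).trans (Submodule.orthogonal_orthogonal _).le
  refine le_trans (le_iInf₂ fun e he => ?_) (iInf_HsubSym_le_Dsub hG)
  exact (Submodule.orthogonal_le (le_biSup (fun e => (HsubSym X n e)ᗮ) he)).trans
    (Submodule.orthogonal_orthogonal _).le

lemma eventually_exists_edge_decomposition (G : SimpleGraph (Fin n)) :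
    ∀ᶠ C in atTop, G.Connected → ∀ v ∈ (Dsub X n)ᗮ,
      ∃ z : Sym2 (Fin n) → PiLp 2 (fun _ : Fin n => X),
        (∀ e ∈ G.edgeFinset, z e ∈ (HsubSym X n e)ᗮ) ∧
        (∑ e ∈ G.edgeFinset, z e) = v ∧
        ∀ e ∈ G.edgeFinset, ‖z e‖ ≤ C * ‖v‖ := by
  by_cases hG : G.Connected
  · filter_upwards [Submodule.eventually_exists_sum_eq_of_mem_iSup_finset
      (fun e => (HsubSym X n e)ᗮ) G.edgeFinset] with C hC _ v hv
    exact hC v (orthogonal_Dsub_le_iSup_orthogonal_HsubSym hG hv)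
  · exact Eventually.of_forall fun _ h => absurd h hG

end

theorem stmt2_general {X : Type*} [NormedAddCommGroup X] [InnerProductSpace ℝ X]
    [FiniteDimensional ℝ X] {n : ℕ}
    (G : SimpleGraph (Fin n)) :
    ∃ C₁ : ℝ, 0 < C₁ ∧
      ∀ G' : SimpleGraph (Fin n), G' ≤ G → G'.Connected →
        ∀ v ∈ (Dsub X n)ᗮ,
          ∃ z : Sym2 (Fin n) → PiLp 2 (fun _ : Fin n => X),
            (∀ e ∈ G'.edgeFinset, z e ∈ (HsubSym X n e)ᗮ) ∧
            (∑ e ∈ G'.edgeFinset, z e) = v ∧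
            ∀ e ∈ G'.edgeFinset, ‖z e‖ ≤ C₁ * ‖v‖ := by
  obtain ⟨C, hC, hpos⟩ := ((eventually_all.2 fun G' =>
    eventually_exists_edge_decomposition (X := X) G').and (eventually_gt_atTop 0)).exists
  exact ⟨C, hpos, fun G' _ => hC G'⟩

theorem stmt2 {X : Type*} [NormedAddCommGroup X] [InnerProductSpace ℝ X]
    [FiniteDimensional ℝ X] {n : ℕ} (hn : 1 ≤ n)
    (G : SimpleGraph (Fin n)) (hG : G.Connected) :
    ∃ C₁ : ℝ, 0 < C₁ ∧
      ∀ G' : SimpleGraph (Fin n), G' ≤ G → G'.Connected →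
        ∀ v ∈ (Dsub X n)ᗮ,
          ∃ z : Sym2 (Fin n) → PiLp 2 (fun _ : Fin n => X),
            (∀ e ∈ G'.edgeFinset, z e ∈ (HsubSym X n e)ᗮ) ∧
            (∑ e ∈ G'.edgeFinset, z e) = v ∧
            ∀ e ∈ G'.edgeFinset, ‖z e‖ ≤ C₁ * ‖v‖ :=
  stmt2_general G
end

section
/- Let H be a finite-dimensional Hilbert space, x₀ ∈ H, and for a finite index set A let h_α : H → ℝ∪{∞} be proper closed convex functions, α ∈ A. Fix S ⊆ A nonempty and vectors z_α ∈ H for α ∉ S. If ({z_α*}_{α∈S}) minimizes ({z_α}_{α∈S}) ↦ ½‖x₀ − Σ_{α∉S} z_α − Σ_{α∈S} z_α‖² + Σ_{α∈S} h_α*(z_α), then x* := x₀ − Σ_{α∉S} z_α − Σ_{α∈S} z_α* minimizes x ↦ Σ_{α∈S} h_α(x) + ½‖x − (x₀ − Σ_{α∉S} z_α)‖². Conversely, if x* minimizes the latter and there exist z̃_α ∈ ∂h_α(x*) for α ∈ S with x* − x₀ + Σ_{α∉S} z_α + Σ_{α∈S} z̃_α = 0, then ({z̃_α}_{α∈S})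 minimizes the former. -/
/-- Fenchel conjugate of an extended-real-valued function on a real inner product space. -/
noncomputable def fconj {H : Type*} [NormedAddCommGroup H] [InnerProductSpace ℝ H]
    (h : H → EReal) (z : H) : EReal :=
  ⨆ x : H, ((inner ℝ z x : ℝ) : EReal) - h x

/-- `v` is a subgradient of `h` at `x`. -/
def InSubdiff {H : Type*} [NormedAddCommGroup H] [InnerProductSpace ℝ H]
    (h : H → EReal) (x v : H) : Prop :=
  ∀ y : H, h x + ((inner ℝ v (y - x) : ℝ) : EReal) ≤ h y

/-!
Forward direction. Minimality of `zstar` in the single block `α` says that `zstar α` minimizes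
`u ↦ ½‖x* + zstar α - u‖² + h_α*(u)`; varying along segments (the conjugate is convex) gives
`⟪x*, u⟫ - h_α*(u) ≤ ⟪x*, zstar α⟫ - h_α*(zstar α)`, and Fenchel–Moreau turns this into
`zstar α ∈ ∂h_α(x*)`. Fenchel–Moreau itself comes from separating a point below the graph from the
closed convex epigraph in `H × ℝ`: a non-vertical hyperplane is an affine minorant `⟪u, ·⟫ - c`
of `h_α` (i.e. `h_α*(u) ≤ c`), and a vertical one is used to tilt such a minorant. Summing over
`S`, `y - x* ∈ ∂(Σ h_α)(x*)` for `y = x₀ - Σ_{α∉S} z_α`, the optimality condition of the prox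
problem.

Converse. Fenchel–Young holds with equality at `z̃_α ∈ ∂h_α(x*)` and as an inequality at any
`w_α`; with `Σ z̃_α = y - x*` the dual objective at `w` then exceeds that at `z̃` by at least
`½‖y - Σ w_α - x*‖²`.
-/

open Filter Topology
open scoped RealInnerProductSpace

namespace EReal

theorem coe_finset_sum {ι : Type*} (s : Finset ι) (f : ι → ℝ) :
    ((∑ i ∈ s, f i : ℝ) : EReal) = ∑ i ∈ s, (f i : EReal) :=
  map_sum (⟨⟨Real.toEReal, coe_zero⟩, coe_add⟩ : ℝ →+ EReal) f s

theorem coe_sub_le_coe_iff {a c : ℝ} {b : EReal} :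
    (a : EReal) - b ≤ c ↔ ((a - c : ℝ) : EReal) ≤ b := by
  induction b with
  | bot => simpa using coe_ne_bot (a - c)
  | top => simp
  | coe m =>
    rw [← coe_sub, EReal.coe_le_coe_iff, EReal.coe_le_coe_iff]
    constructor <;> intro <;> linarith

theorem sum_ne_bot {ι : Type*} {s : Finset ι} {f : ι → EReal} (h : ∀ i ∈ s, f i ≠ ⊥) :
    ∑ i ∈ s, f i ≠ ⊥ :=
  Finset.sum_induction f (· ≠ ⊥) (fun _ _ ha hb => by simp [add_eq_bot_iff, ha, hb])
    zero_ne_bot h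

theorem ne_top_of_sum_ne_top {ι : Type*} {s : Finset ι} {f : ι → EReal}
    (hbot : ∀ i ∈ s, f i ≠ ⊥) (hsum : ∑ i ∈ s, f i ≠ ⊤) {i : ι} (hi : i ∈ s) : f i ≠ ⊤ := by
  classical
  intro htop
  rw [← Finset.add_sum_erase s f hi, htop,
    top_add_of_ne_bot (sum_ne_bot fun j hj => hbot j (Finset.mem_of_mem_erase hj))] at hsum
  exact hsum rfl

end EReal

theorem nonpos_of_forall_le_mul {δ K : ℝ} (h : ∀ t : ℝ, 0 < t → t ≤ 1 → δ ≤ t * K) : δ ≤ 0 := by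
  have hlim : Tendsto (fun t : ℝ => t * K) (𝓝[>] 0) (𝓝 0) := by
    simpa using ((continuous_mul_const K).tendsto 0).mono_left nhdsWithin_le_nhds
  exact ge_of_tendsto hlim <| by
    filter_upwards [Ioc_mem_nhdsGT one_pos] with t ht using h t ht.1 ht.2

section Conjugate

variable {H : Type*} [NormedAddCommGroup H] [InnerProductSpace ℝ H] {g : H → EReal}

def IsProperFun (g : H → EReal) : Prop := (∀ x, g x ≠ ⊥) ∧ ∃ x, g x ≠ ⊤

def IsConvexFun (g : H → EReal) : Prop :=
  ∀ x y : H, ∀ a b : ℝ, 0 ≤ a → 0 ≤ b → a + b = 1 →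
    g (a • x + b • y) ≤ (a : EReal) * g x + (b : EReal) * g y

theorem le_fconj (g : H → EReal) (z x : H) : (⟪z, x⟫ : EReal) - g x ≤ fconj g z :=
  le_iSup (fun x => (⟪z, x⟫ : EReal) - g x) x

theorem fconj_le_coe_iff {z : H} {c : ℝ} :
    fconj g z ≤ c ↔ ∀ x, ((⟪z, x⟫ - c : ℝ) : EReal) ≤ g x :=
  iSup_le_iff.trans (forall_congr' fun _ => EReal.coe_sub_le_coe_iff)

theorem fconj_ne_bot {x : H} (hx : g x ≠ ⊤) (z : H) : fconj g z ≠ ⊥ := by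
  refine ne_bot_of_le_ne_bot ?_ (le_fconj g z x)
  rcases eq_or_ne (g x) ⊥ with hbot | hbot
  · simp [hbot]
  · rw [← EReal.coe_toReal hx hbot, ← EReal.coe_sub]
    exact EReal.coe_ne_bot _

theorem fconj_combo_le {z₁ z₂ : H} {c₁ c₂ a b : ℝ} (ha : 0 ≤ a) (hb : 0 ≤ b) (hab : a + b = 1)
    (h₁ : fconj g z₁ ≤ c₁) (h₂ : fconj g z₂ ≤ c₂) :
    fconj g (a • z₁ + b • z₂) ≤ ((a * c₁ + b * c₂ : ℝ) : EReal) := by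
  rw [fconj_le_coe_iff] at h₁ h₂ ⊢
  intro x
  calc ((⟪a • z₁ + b • z₂, x⟫ - (a * c₁ + b * c₂) : ℝ) : EReal)
      = ((a • (⟪z₁, x⟫ - c₁) + b • (⟪z₂, x⟫ - c₂) : ℝ) : EReal) := by
        rw [inner_add_left, real_inner_smul_left, real_inner_smul_left, smul_eq_mul, smul_eq_mul]
        ring_nf
    _ ≤ ((max (⟪z₁, x⟫ - c₁) (⟪z₂, x⟫ - c₂) : ℝ) : EReal) :=
        EReal.coe_le_coe_iff.2 (Convex.combo_le_max _ _ ha hb hab)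
    _ ≤ g x := by
        rw [EReal.coe_strictMono.monotone.map_max]
        exact max_le (h₁ x) (h₂ x)

theorem convex_realEpigraph (hconv : IsConvexFun g) : Convex ℝ {p : H × ℝ | g p.1 ≤ p.2} := by
  rintro ⟨x, r⟩ hx ⟨y, s⟩ hy a b ha hb hab
  calc g (a • x + b • y) ≤ (a : EReal) * g x + (b : EReal) * g y := hconv x y a b ha hb hab
    _ ≤ (a : EReal) * r + (b : EReal) * s := by
        gcongr
        exacts [hx, hy]
    _ = ((a * r + b * s : ℝ) : EReal) := by norm_cast

theorem exists_inner_add_mul_eq [CompleteSpace H] (f : StrongDual ℝ (H × ℝ)) :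
    ∃ (v : H) (s : ℝ), ∀ p : H × ℝ, f p = ⟪v, p.1⟫ + s * p.2 := by
  refine ⟨(InnerProductSpace.toDual ℝ H).symm (f.comp (.inl ℝ H ℝ)), f (0, 1), fun p => ?_⟩
  rw [InnerProductSpace.toDual_symm_apply]
  calc f p = f (p.1, 0) + p.2 • f (0, 1) := by rw [← map_smul, ← map_add]; simp
    _ = _ := by simp [mul_comm]

theorem exists_separation_of_lt [CompleteSpace H] (hlsc : LowerSemicontinuous g)
    (hconv : IsConvexFun g) {x : H} {t : ℝ} (ht : (t : EReal) < g x) :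
    ∃ (v : H) (s c : ℝ), ⟪v, x⟫ + s * t < c ∧ ∀ y (r : ℝ), g y ≤ r → c < ⟪v, y⟫ + s * r := by
  have hclosed : IsClosed {p : H × ℝ | g p.1 ≤ p.2} :=
    hlsc.isClosed_epigraph.preimage (continuous_fst.prodMk (continuous_coe_real_ereal.comp
      continuous_snd))
  obtain ⟨f, c, hfx, hfE⟩ :=
    geometric_hahn_banach_point_closed (convex_realEpigraph hconv) hclosed
      (show (x, t) ∉ {p : H × ℝ | g p.1 ≤ p.2} from ht.not_ge)
  obtain ⟨v, s, hf⟩ := exists_inner_add_mul_eq f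
  exact ⟨v, s, c, hf (x, t) ▸ hfx, fun y r hyr => hf (y, r) ▸ hfE (y, r) hyr⟩

theorem nonneg_of_separation {x : H} (hx : g x ≠ ⊤) {v : H} {s c : ℝ}
    (hE : ∀ y (r : ℝ), g y ≤ r → c < ⟪v, y⟫ + s * r) : 0 ≤ s := by
  by_contra! hs
  set r := max (g x).toReal ((c - ⟪v, x⟫) / s)
  have hcr : s * r ≤ c - ⟪v, x⟫ := by
    have := le_max_right (g x).toReal ((c - ⟪v, x⟫) / s)
    rw [div_le_iff_of_neg hs] at this
    linarith
  have := hE x r ((EReal.le_coe_toReal hx).trans (EReal.coe_le_coe_iff.2 (le_max_left _ _)))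
  linarith

theorem exists_fconj_le_of_separation {x : H} {t : ℝ} {v : H} {s c : ℝ} (hs : 0 < s)
    (hx : ⟪v, x⟫ + s * t < c) (hE : ∀ y (r : ℝ), g y ≤ r → c < ⟪v, y⟫ + s * r) :
    ∃ (u : H) (c' : ℝ), fconj g u ≤ c' ∧ t < ⟪u, x⟫ - c' := by
  have hinner (y : H) : ⟪-s⁻¹ • v, y⟫ - -(c / s) = (c - ⟪v, y⟫) / s := by
    rw [real_inner_smul_left]; field_simp; ring
  refine ⟨-s⁻¹ • v, -(c / s), fconj_le_coe_iff.2 fun y => ?_, ?_⟩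
  · refine EReal.le_of_forall_lt_iff_le.1 fun r hr => EReal.coe_le_coe_iff.2 ?_
    rw [hinner, div_le_iff₀ hs]
    linarith [hE y r hr.le]
  · rw [hinner, lt_div_iff₀ hs]
    linarith

variable [CompleteSpace H]

theorem exists_fconj_le (hg : IsProperFun g) (hlsc : LowerSemicontinuous g)
    (hconv : IsConvexFun g) : ∃ (u : H) (c : ℝ), fconj g u ≤ c := by
  obtain ⟨x, hx⟩ := hg.2
  obtain ⟨m, hm⟩ : ∃ m : ℝ, g x = m := ⟨_, (EReal.coe_toReal hx (hg.1 x)).symm⟩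
  have ht : ((m - 1 : ℝ) : EReal) < g x := by
    rw [hm, EReal.coe_lt_coe_iff]; linarith
  obtain ⟨v, s, c, hxs, hE⟩ := exists_separation_of_lt hlsc hconv ht
  have hs : 0 < s := by nlinarith [hE x m hm.le]
  obtain ⟨u, c', hu, -⟩ := exists_fconj_le_of_separation hs hxs hE
  exact ⟨u, c', hu⟩

theorem exists_fconj_le_of_lt (hg : IsProperFun g) (hlsc : LowerSemicontinuous g)
    (hconv : IsConvexFun g) {x : H} {t : ℝ} (ht : (t : EReal) < g x) :
    ∃ (u : H) (c : ℝ), fconj g u ≤ c ∧ t < ⟪u, x⟫ - c := by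
  obtain ⟨v, s, c, hxs, hE⟩ := exists_separation_of_lt hlsc hconv ht
  obtain ⟨xd, hxd⟩ := hg.2
  rcases (nonneg_of_separation hxd hE).lt_or_eq with hs | rfl
  · exact exists_fconj_le_of_separation hs hxs hE
  -- vertical hyperplane: tilt an arbitrary affine minorant along `-v`
  simp only [zero_mul, add_zero] at hxs hE
  obtain ⟨z₀, m₀, h₀⟩ := exists_fconj_le hg hlsc hconv
  set d := c - ⟪v, x⟫
  have hd : 0 < d := by linarith
  set l := (|t - ⟪z₀, x⟫ + m₀| + 1) / d
  have hl : 0 ≤ l := by positivity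
  refine ⟨z₀ - l • v, m₀ - l * c, fconj_le_coe_iff.2 fun y => ?_, ?_⟩
  · rcases eq_or_ne (g y) ⊤ with hy | hy
    · simp [hy]
    have hvy : c < ⟪v, y⟫ := hE y _ (EReal.le_coe_toReal hy)
    refine le_trans (EReal.coe_le_coe_iff.2 ?_) (fconj_le_coe_iff.1 h₀ y)
    rw [inner_sub_left, real_inner_smul_left]
    nlinarith
  · have hld : l * d = |t - ⟪z₀, x⟫ + m₀| + 1 := div_mul_cancel₀ _ hd.ne'
    rw [inner_sub_left, real_inner_smul_left]
    linarith [le_abs_self (t - ⟪z₀, x⟫ + m₀)]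

theorem le_of_forall_inner_sub_fconj_le (hg : IsProperFun g) (hlsc : LowerSemicontinuous g)
    (hconv : IsConvexFun g) {x : H} {M : ℝ} (h : ∀ u, (⟪x, u⟫ : EReal) - fconj g u ≤ M) :
    g x ≤ M := by
  by_contra! hlt
  obtain ⟨u, c, hu, hM⟩ := exists_fconj_le_of_lt hg hlsc hconv hlt
  have := (EReal.sub_le_sub le_rfl hu).trans (h u)
  rw [real_inner_comm, ← EReal.coe_sub, EReal.coe_le_coe_iff] at this
  linarith

end Conjugate

section Subdifferential

variable {H : Type*} [NormedAddCommGroup H] [InnerProductSpace ℝ H] {g : H → EReal}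

theorem inner_sub_fconj_le_of_forall_le {x z : H} {c : ℝ} (hz : fconj g z = c)
    (hmin : ∀ u, ((1 / 2 * ‖x‖ ^ 2 : ℝ) : EReal) + fconj g z
      ≤ ((1 / 2 * ‖x + z - u‖ ^ 2 : ℝ) : EReal) + fconj g u) (u : H) :
    (⟪x, u⟫ : EReal) - fconj g u ≤ ((⟪x, z⟫ - c : ℝ) : EReal) := by
  rw [hz] at hmin
  obtain hu | hu | ⟨d, hu⟩ : fconj g u = ⊥ ∨ fconj g u = ⊤ ∨ ∃ d : ℝ, fconj g u = d := by
    induction fconj g u <;> simp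
  · have := hmin u
    rw [hu, EReal.add_bot, le_bot_iff, ← EReal.coe_add] at this
    exact absurd this (EReal.coe_ne_bot _)
  · simp [hu]
  rw [hu, ← EReal.coe_sub, EReal.coe_le_coe_iff]
  -- the one-sided derivative of the prox objective along `u - z` is nonnegative
  have key (t : ℝ) (ht0 : 0 < t) (ht1 : t ≤ 1) :
      c + ⟪x, u - z⟫ - d ≤ t * (1 / 2 * ‖u - z‖ ^ 2) := by
    have hcomb := fconj_combo_le (sub_nonneg.2 ht1) ht0.le (sub_add_cancel 1 t) hz.le hu.le
    have h := (hmin ((1 - t) • z + t • u)).trans (add_le_add_right hcomb _)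
    rw [← EReal.coe_add, ← EReal.coe_add, EReal.coe_le_coe_iff] at h
    have e : x + z - ((1 - t) • z + t • u) = x - t • (u - z) := by module
    rw [e, norm_sub_sq_real, real_inner_smul_right, norm_smul, Real.norm_eq_abs, mul_pow,
      sq_abs] at h
    nlinarith
  have := nonpos_of_forall_le_mul key
  rw [inner_sub_right] at this
  linarith

theorem inSubdiff_of_forall_le_fconj [CompleteSpace H] (hg : IsProperFun g)
    (hlsc : LowerSemicontinuous g) (hconv : IsConvexFun g) {x z : H} {c : ℝ}
    (hz : fconj g z = c)
    (hmin : ∀ u, ((1 / 2 * ‖x‖ ^ 2 : ℝ) : EReal) + fconj g z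
      ≤ ((1 / 2 * ‖x + z - u‖ ^ 2 : ℝ) : EReal) + fconj g u) :
    InSubdiff g x z := by
  have hx : g x ≤ ((⟪x, z⟫ - c : ℝ) : EReal) :=
    le_of_forall_inner_sub_fconj_le hg hlsc hconv (inner_sub_fconj_le_of_forall_le hz hmin)
  intro y
  calc g x + ⟪z, y - x⟫ ≤ ((⟪x, z⟫ - c : ℝ) : EReal) + ⟪z, y - x⟫ := add_le_add_left hx _
    _ = ((⟪z, y⟫ - c : ℝ) : EReal) := by
        rw [← EReal.coe_add, inner_sub_right, real_inner_comm]; ring_nf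
    _ ≤ g y := fconj_le_coe_iff.1 hz.le y

theorem InSubdiff.fconj_eq {x v : H} {m : ℝ} (hv : InSubdiff g x v) (hx : g x = m) :
    fconj g v = ((⟪v, x⟫ - m : ℝ) : EReal) := by
  refine le_antisymm (fconj_le_coe_iff.2 fun y => ?_) ?_
  · calc ((⟪v, y⟫ - (⟪v, x⟫ - m) : ℝ) : EReal) = g x + ⟪v, y - x⟫ := by
          rw [hx, ← EReal.coe_add, inner_sub_right]; ring_nf
      _ ≤ g y := hv y
  · rw [EReal.coe_sub, ← hx]
    exact le_fconj g v x

theorem InSubdiff.sum {ι : Type*} {s : Finset ι} {f : ι → H → EReal} {x : H} {v : ι → H}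
    (hv : ∀ i ∈ s, InSubdiff (f i) x (v i)) :
    InSubdiff (fun y => ∑ i ∈ s, f i y) x (∑ i ∈ s, v i) := by
  intro y
  calc ∑ i ∈ s, f i x + ((⟪∑ i ∈ s, v i, y - x⟫ : ℝ) : EReal)
      = ∑ i ∈ s, (f i x + ⟪v i, y - x⟫) := by
        rw [sum_inner, EReal.coe_finset_sum, Finset.sum_add_distrib]
    _ ≤ ∑ i ∈ s, f i y := Finset.sum_le_sum fun i hi => hv i hi y

theorem InSubdiff.add_half_norm_sq_le {f : H → EReal} {x y : H} (hv : InSubdiff f x (y - x))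
    (w : H) :
    f x + ((1 / 2 * ‖x - y‖ ^ 2 : ℝ) : EReal) ≤ f w + ((1 / 2 * ‖w - y‖ ^ 2 : ℝ) : EReal) := by
  have hnorm : 1 / 2 * ‖x - y‖ ^ 2 ≤ ⟪y - x, w - x⟫ + 1 / 2 * ‖w - y‖ ^ 2 := by
    have := norm_sub_sq_real (w - x) (y - x)
    rw [sub_sub_sub_cancel_right, real_inner_comm] at this
    rw [norm_sub_rev x y]
    nlinarith [sq_nonneg ‖w - x‖]
  calc f x + ((1 / 2 * ‖x - y‖ ^ 2 : ℝ) : EReal)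
      ≤ f x + ((⟪y - x, w - x⟫ + 1 / 2 * ‖w - y‖ ^ 2 : ℝ) : EReal) :=
        add_le_add_right (EReal.coe_le_coe_iff.2 hnorm) _
    _ = (f x + ⟪y - x, w - x⟫) + ((1 / 2 * ‖w - y‖ ^ 2 : ℝ) : EReal) := by
        rw [EReal.coe_add, add_assoc]
    _ ≤ f w + ((1 / 2 * ‖w - y‖ ^ 2 : ℝ) : EReal) := add_le_add_left (hv w) _

end Subdifferential

theorem le_of_forall_le_update {ι M : Type*} [DecidableEq ι] [AddCommMonoid M] {s : Finset ι}
    {φ : M → ℝ} {f : ι → M → EReal} {z : ι → M} {c : ι → ℝ} (hc : ∀ j ∈ s, f j (z j) = c j)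
    (hmin : ∀ w : ι → M, (φ (∑ j ∈ s, z j) : EReal) + ∑ j ∈ s, f j (z j)
      ≤ (φ (∑ j ∈ s, w j) : EReal) + ∑ j ∈ s, f j (w j))
    {i : ι} (hi : i ∈ s) (u : M) :
    (φ (∑ j ∈ s, z j) : EReal) + f i (z i) ≤ (φ (u + ∑ j ∈ s \ {i}, z j) : EReal) + f i u := by
  have hrest : ∑ j ∈ s \ {i}, f j (Function.update z i u j) = ∑ j ∈ s \ {i}, c j := by
    rw [EReal.coe_finset_sum]
    refine Finset.sum_congr rfl fun j hj => ?_
    rw [Function.update_of_ne ((Finset.mem_sdiff.1 hj).2 ∘ Finset.mem_singleton.2),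
      hc j (Finset.sdiff_subset hj)]
  have hz : ∑ j ∈ s, f j (z j) = f i (z i) + ∑ j ∈ s \ {i}, c j := by
    rw [Finset.sum_eq_add_sum_sdiff_singleton_of_mem hi, EReal.coe_finset_sum]
    exact congrArg _ (Finset.sum_congr rfl fun j hj => hc j (Finset.sdiff_subset hj))
  have h := hmin (Function.update z i u)
  rw [Finset.sum_update_of_mem hi, hz, Finset.sum_eq_add_sum_sdiff_singleton_of_mem hi
    (fun j => f j (Function.update z i u j)), hrest, Function.update_self, ← add_assoc,
    ← add_assoc] at h
  exact (EReal.addLECancellable_coe _).add_le_add_iff_right.1 h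

section Duality

variable {H : Type*} [NormedAddCommGroup H] [InnerProductSpace ℝ H] {A : Type*}
  {h : A → H → EReal} {S : Finset A} {y : H}

theorem isMin_prox_of_isMin_dual [CompleteSpace H] [DecidableEq A] (hg : ∀ α, IsProperFun (h α))
    (hlsc : ∀ α, LowerSemicontinuous (h α)) (hconv : ∀ α, IsConvexFun (h α)) {zstar : A → H}
    (hmin : ∀ w : A → H,
      (((1:ℝ)/2 * ‖y - ∑ α ∈ S, zstar α‖ ^ 2 : ℝ) : EReal) + ∑ α ∈ S, fconj (h α) (zstar α)
        ≤ (((1:ℝ)/2 * ‖y - ∑ α ∈ S, w α‖ ^ 2 : ℝ) : EReal) + ∑ α ∈ S, fconj (h α) (w α))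
    (x : H) :
    (∑ α ∈ S, h α (y - ∑ α ∈ S, zstar α))
        + (((1:ℝ)/2 * ‖(y - ∑ α ∈ S, zstar α) - y‖ ^ 2 : ℝ) : EReal)
      ≤ (∑ α ∈ S, h α x) + (((1:ℝ)/2 * ‖x - y‖ ^ 2 : ℝ) : EReal) := by
  set xs := y - ∑ α ∈ S, zstar α with hxs
  have hbot (α : A) (u : H) : fconj (h α) u ≠ ⊥ := fconj_ne_bot (hg α).2.choose_spec u
  choose z₀ c₀ hz₀ using fun α => exists_fconj_le (hg α) (hlsc α) (hconv α)
  have htop : ∀ α ∈ S, fconj (h α) (zstar α) ≠ ⊤ := by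
    refine fun α hα => EReal.ne_top_of_sum_ne_top (fun β _ => hbot β _) (fun hsum => ?_) hα
    have := (hmin z₀).trans (add_le_add_right (Finset.sum_le_sum fun β _ => hz₀ β) _)
    rw [hsum, EReal.add_top_of_ne_bot (EReal.coe_ne_bot _), ← EReal.coe_finset_sum,
      ← EReal.coe_add, top_le_iff] at this
    exact EReal.coe_ne_top _ this
  have hc : ∀ α ∈ S, fconj (h α) (zstar α) = (fconj (h α) (zstar α)).toReal :=
    fun α hα => (EReal.coe_toReal (htop α hα) (hbot α _)).symm
  have hsub : ∀ α ∈ S, InSubdiff (h α) xs (zstar α) := by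
    refine fun α hα => inSubdiff_of_forall_le_fconj (hg α) (hlsc α) (hconv α) (hc α hα)
      fun u => ?_
    have := le_of_forall_le_update (φ := fun v => 1 / 2 * ‖y - v‖ ^ 2) hc hmin hα u
    rwa [show y - (u + ∑ β ∈ S \ {α}, zstar β) = xs + zstar α - u by
      rw [hxs, Finset.sum_eq_add_sum_sdiff_singleton_of_mem hα]; abel] at this
  have hsum : ∑ α ∈ S, zstar α = y - xs := (sub_sub_self y _).symm
  exact (hsum ▸ InSubdiff.sum hsub).add_half_norm_sq_le x

theorem isMin_dual_of_inSubdiff (hg : ∀ α, IsProperFun (h α)) {xstar : H} {ztil : A → H}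
    (hsub : ∀ α ∈ S, InSubdiff (h α) xstar (ztil α)) (hsum : ∑ α ∈ S, ztil α = y - xstar)
    (w : A → H) :
    (((1:ℝ)/2 * ‖y - ∑ α ∈ S, ztil α‖ ^ 2 : ℝ) : EReal) + ∑ α ∈ S, fconj (h α) (ztil α)
      ≤ (((1:ℝ)/2 * ‖y - ∑ α ∈ S, w α‖ ^ 2 : ℝ) : EReal) + ∑ α ∈ S, fconj (h α) (w α) := by
  have htop : ∀ α ∈ S, h α xstar ≠ ⊤ := by
    intro α hα hx
    obtain ⟨xd, hxd⟩ := (hg α).2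
    have := hsub α hα xd
    rw [hx, EReal.top_add_of_ne_bot (EReal.coe_ne_bot _), top_le_iff] at this
    exact hxd this
  set p := fun α => (h α xstar).toReal
  have hp : ∀ α ∈ S, h α xstar = p α :=
    fun α hα => (EReal.coe_toReal (htop α hα) ((hg α).1 xstar)).symm
  have hL : ∑ α ∈ S, fconj (h α) (ztil α) = ((∑ α ∈ S, (⟪ztil α, xstar⟫ - p α) : ℝ) : EReal) := by
    rw [EReal.coe_finset_sum]
    exact Finset.sum_congr rfl fun α hα => (hsub α hα).fconj_eq (hp α hα)
  have hR : ((∑ α ∈ S, (⟪w α, xstar⟫ - p α) : ℝ) : EReal) ≤ ∑ α ∈ S, fconj (h α) (w α) := by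
    rw [EReal.coe_finset_sum]
    refine Finset.sum_le_sum fun α hα => ?_
    rw [EReal.coe_sub, ← hp α hα]
    exact le_fconj _ _ _
  rw [hL]
  refine le_trans ?_ (add_le_add_right hR _)
  rw [← EReal.coe_add, ← EReal.coe_add, EReal.coe_le_coe_iff, Finset.sum_sub_distrib,
    Finset.sum_sub_distrib, ← sum_inner, ← sum_inner, hsum, sub_sub_cancel]
  have := norm_sub_sq_real (y - ∑ α ∈ S, w α) xstar
  rw [inner_sub_left] at this
  rw [inner_sub_left, real_inner_self_eq_norm_sq]
  nlinarith [sq_nonneg ‖y - ∑ α ∈ S, w α - xstar‖]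

end Duality

theorem stmt15_general {H : Type*} [NormedAddCommGroup H] [InnerProductSpace ℝ H]
    [FiniteDimensional ℝ H] {A : Type*} [Fintype A] [DecidableEq A]
    (h : A → H → EReal)
    (hproper : ∀ α, (∀ x, h α x ≠ ⊥) ∧ ∃ x, h α x ≠ ⊤)
    (hlsc : ∀ α, LowerSemicontinuous (h α))
    (hconv : ∀ α, ∀ x y : H, ∀ a b : ℝ, 0 ≤ a → 0 ≤ b → a + b = 1 →
      h α (a • x + b • y) ≤ (a : EReal) * h α x + (b : EReal) * h α y)
    (x₀ : H) (S : Finset A) (z : A → H) :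
    -- forward direction: dual block minimizer gives primal minimizer
    (∀ zstar : A → H,
      (∀ w : A → H,
        (((1:ℝ)/2 * ‖x₀ - ∑ α ∈ Sᶜ, z α - ∑ α ∈ S, zstar α‖ ^ 2 : ℝ) : EReal)
            + ∑ α ∈ S, fconj (h α) (zstar α)
          ≤ (((1:ℝ)/2 * ‖x₀ - ∑ α ∈ Sᶜ, z α - ∑ α ∈ S, w α‖ ^ 2 : ℝ) : EReal)
            + ∑ α ∈ S, fconj (h α) (w α)) →
      (∀ x : H,
        (∑ α ∈ S, h α (x₀ - ∑ α ∈ Sᶜ, z α - ∑ α ∈ S, zstar α))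
            + (((1:ℝ)/2 * ‖(x₀ - ∑ α ∈ Sᶜ, z α - ∑ α ∈ S, zstar α)
                - (x₀ - ∑ α ∈ Sᶜ, z α)‖ ^ 2 : ℝ) : EReal)
          ≤ (∑ α ∈ S, h α x)
            + (((1:ℝ)/2 * ‖x - (x₀ - ∑ α ∈ Sᶜ, z α)‖ ^ 2 : ℝ) : EReal))) ∧
    -- converse direction
    (∀ xstar : H, ∀ ztil : A → H,
      (∀ x : H,
        (∑ α ∈ S, h α xstar)
            + (((1:ℝ)/2 * ‖xstar - (x₀ - ∑ α ∈ Sᶜ, z α)‖ ^ 2 : ℝ) : EReal)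
          ≤ (∑ α ∈ S, h α x)
            + (((1:ℝ)/2 * ‖x - (x₀ - ∑ α ∈ Sᶜ, z α)‖ ^ 2 : ℝ) : EReal)) →
      (∀ α ∈ S, InSubdiff (h α) xstar (ztil α)) →
      xstar - x₀ + ∑ α ∈ Sᶜ, z α + ∑ α ∈ S, ztil α = 0 →
      (∀ w : A → H,
        (((1:ℝ)/2 * ‖x₀ - ∑ α ∈ Sᶜ, z α - ∑ α ∈ S, ztil α‖ ^ 2 : ℝ) : EReal)
            + ∑ α ∈ S, fconj (h α) (ztil α)
          ≤ (((1:ℝ)/2 * ‖x₀ - ∑ α ∈ Sᶜ, z α - ∑ α ∈ S, w α‖ ^ 2 : ℝ) : EReal)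
            + ∑ α ∈ S, fconj (h α) (w α))) := by
  refine ⟨fun zstar hmin x => isMin_prox_of_isMin_dual hproper hlsc hconv hmin x,
    fun xstar ztil _ hsub hzero => isMin_dual_of_inSubdiff hproper hsub ?_⟩
  rw [← sub_eq_zero, ← hzero]
  abel

theorem stmt15 {H : Type*} [NormedAddCommGroup H] [InnerProductSpace ℝ H]
    [FiniteDimensional ℝ H] {A : Type*} [Fintype A] [DecidableEq A]
    (h : A → H → EReal)
    (hproper : ∀ α, (∀ x, h α x ≠ ⊥) ∧ ∃ x, h α x ≠ ⊤)
    (hlsc : ∀ α, LowerSemicontinuous (h α))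
    (hconv : ∀ α, ∀ x y : H, ∀ a b : ℝ, 0 ≤ a → 0 ≤ b → a + b = 1 →
      h α (a • x + b • y) ≤ (a : EReal) * h α x + (b : EReal) * h α y)
    (x₀ : H) (S : Finset A) (hS : S.Nonempty) (z : A → H) :
    -- forward direction: dual block minimizer gives primal minimizer
    (∀ zstar : A → H,
      (∀ w : A → H,
        (((1:ℝ)/2 * ‖x₀ - ∑ α ∈ Sᶜ, z α - ∑ α ∈ S, zstar α‖ ^ 2 : ℝ) : EReal)
            + ∑ α ∈ S, fconj (h α) (zstar α)
          ≤ (((1:ℝ)/2 * ‖x₀ - ∑ α ∈ Sᶜ, z α - ∑ α ∈ S, w α‖ ^ 2 : ℝ) : EReal)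
            + ∑ α ∈ S, fconj (h α) (w α)) →
      (∀ x : H,
        (∑ α ∈ S, h α (x₀ - ∑ α ∈ Sᶜ, z α - ∑ α ∈ S, zstar α))
            + (((1:ℝ)/2 * ‖(x₀ - ∑ α ∈ Sᶜ, z α - ∑ α ∈ S, zstar α)
                - (x₀ - ∑ α ∈ Sᶜ, z α)‖ ^ 2 : ℝ) : EReal)
          ≤ (∑ α ∈ S, h α x)
            + (((1:ℝ)/2 * ‖x - (x₀ - ∑ α ∈ Sᶜ, z α)‖ ^ 2 : ℝ) : EReal))) ∧
    -- converse direction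
    (∀ xstar : H, ∀ ztil : A → H,
      (∀ x : H,
        (∑ α ∈ S, h α xstar)
            + (((1:ℝ)/2 * ‖xstar - (x₀ - ∑ α ∈ Sᶜ, z α)‖ ^ 2 : ℝ) : EReal)
          ≤ (∑ α ∈ S, h α x)
            + (((1:ℝ)/2 * ‖x - (x₀ - ∑ α ∈ Sᶜ, z α)‖ ^ 2 : ℝ) : EReal)) →
      (∀ α ∈ S, InSubdiff (h α) xstar (ztil α)) →
      xstar - x₀ + ∑ α ∈ Sᶜ, z α + ∑ α ∈ S, ztil α = 0 →
      (∀ w : A → H,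
        (((1:ℝ)/2 * ‖x₀ - ∑ α ∈ Sᶜ, z α - ∑ α ∈ S, ztil α‖ ^ 2 : ℝ) : EReal)
            + ∑ α ∈ S, fconj (h α) (ztil α)
          ≤ (((1:ℝ)/2 * ‖x₀ - ∑ α ∈ Sᶜ, z α - ∑ α ∈ S, w α‖ ^ 2 : ℝ) : EReal)
            + ∑ α ∈ S, fconj (h α) (w α))) :=
  stmt15_general h hproper hlsc hconv x₀ S z
end
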